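/- Let P be a full rook placement on a Ferrers board F and let S = S(P,F). If the pair (F,S) satisfies the 312-conditions, then the pair (F,S^+) satisfies the 231-conditions. -/

import Mathlib

/-!
Common definitions: Ferrers boards, rook placements, pattern avoidance,
following Bloom–Saracino, "A Simple Bijection Between 231-Avoiding and
312-Avoiding Placements".

A square of the `n × n` array `𝒜` is recorded by the pair
`(column index, row index)` (0-based), i.e. the square `(c, r)` is the unit
square with SW corner `(c, r)` and NE corner `(c+1, r+1)`.
-/

/-- A square of the grid, given by its (column index, row index), both 0-based. -/
abbrev Square : Type := ℕ × ℕ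

/-- For a vertex `V = (a, b)`, `RV V` is the set of squares of the rectangle `R(V)`
bounded by the lines `x = 0`, `x = a`, `y = 0`, `y = b`: all squares with column
index `< a` and row index `< b`. -/
def RV (V : ℕ × ℕ) : Finset Square := Finset.range V.1 ×ˢ Finset.range V.2

/-- A Ferrers board contained in the `n × n` array `𝒜`: a set of squares such that
`R(V) ⊆ F` for every vertex `V` of `F`, i.e. a downward- and leftward-closed set
of squares. -/
structure FerrersBoard (n : ℕ) where
  squares : Finset Square
  inArray : ∀ s ∈ squares, s.1 < n ∧ s.2 < n
  closed : ∀ s ∈ squares, ∀ t : Square, t.1 ≤ s.1 → t.2 ≤ s.2 → t ∈ squares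

namespace FerrersBoard

variable {n : ℕ}

/-- The number of squares in column `c` of `F`. -/
def colHeight (F : FerrersBoard n) (c : ℕ) : ℕ :=
  (F.squares.filter fun s => s.1 = c).card

/-- The number of squares in row `r` of `F`. -/
def rowWidth (F : FerrersBoard n) (r : ℕ) : ℕ :=
  (F.squares.filter fun s => s.2 = r).card

/-- The length of the longest row of `F` (the bottom row, by closedness),
i.e. the number of nonempty columns of `F`. -/
def width (F : FerrersBoard n) : ℕ := F.rowWidth 0

/-- The length of the longest column of `F` (the leftmost column, by closedness),
i.e. the number of nonempty rows of `F`. -/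
def height (F : FerrersBoard n) : ℕ := F.colHeight 0

/-- `V` is a vertex of `F`, i.e. a corner of one of the squares of `F`. -/
def IsVertex (F : FerrersBoard n) (V : ℕ × ℕ) : Prop :=
  ∃ s ∈ F.squares, (V.1 = s.1 ∨ V.1 = s.1 + 1) ∧ (V.2 = s.2 ∨ V.2 = s.2 + 1)

/-- `V = (a, b)` lies on the right/up border of `F` (the border of `F` excluding
its vertical left-hand side and horizontal bottom): this border is the staircase
lattice path from the top-left corner `(0, height F)` down to `(width F, 0)`, and
its vertices are exactly those `(a, b)` with `a ≤ width F` and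
`colHeight a ≤ b ≤ colHeight (a - 1)` (where for `a = 0` truncated subtraction
makes the condition read `b = height F`). -/
def IsBorderVertex (F : FerrersBoard n) (V : ℕ × ℕ) : Prop :=
  V.1 ≤ F.width ∧ F.colHeight V.1 ≤ V.2 ∧ V.2 ≤ F.colHeight (V.1 - 1)

/-- `V1, V2` are `F`-diagonal vertices: both lie on the right/up border of `F`
and they are the left and right ends of a diagonal of slope `-1` lying entirely
within `F` (the diagonal from `V1 = (a, b)` to `V2 = (a + k, b - k)` passes, for
each `0 ≤ i < k`, through the square with column `a + i` and row `b - i - 1`,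
and all these squares must belong to `F`). -/
def DiagonalVertices (F : FerrersBoard n) (V1 V2 : ℕ × ℕ) : Prop :=
  F.IsBorderVertex V1 ∧ F.IsBorderVertex V2 ∧
    ∃ k : ℕ, V2.1 = V1.1 + k ∧ V1.2 = V2.2 + k ∧
      ∀ i < k, (V1.1 + i, V2.2 + (k - 1 - i)) ∈ F.squares

end FerrersBoard

/-- `V1` is directly to the left of `V2`. -/
def LeftOf (V1 V2 : ℕ × ℕ) : Prop := V2.1 = V1.1 + 1 ∧ V2.2 = V1.2

/-- `V1` is directly below `V2`. -/
def Below (V1 V2 : ℕ × ℕ) : Prop := V2.1 = V1.1 ∧ V2.2 = V1.2 + 1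

/-- `P` is a rook placement on the Ferrers board `F`: a subset of `F` containing
at most one square (marker) from each column and at most one from each row. -/
def IsRookPlacement {n : ℕ} (F : FerrersBoard n) (P : Finset Square) : Prop :=
  P ⊆ F.squares ∧ (∀ x ∈ P, ∀ y ∈ P, x.1 = y.1 → x = y) ∧
    (∀ x ∈ P, ∀ y ∈ P, x.2 = y.2 → x = y)

/-- `P` is a full rook placement on `F`: a rook placement with exactly one marker
in each (nonempty) column and each (nonempty) row of `F`. -/
def IsFullPlacement {n : ℕ} (F : FerrersBoard n) (P : Finset Square) : Prop :=
  IsRookPlacement F P ∧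
    ∀ s ∈ F.squares, (∃ r, (s.1, r) ∈ P) ∧ (∃ c, (c, s.2) ∈ P)

/-- The set of markers `M` contains an occurrence of the pattern `τ ∈ S₃`:
three markers, listed with strictly increasing columns, whose rows are ordered
as the values of `τ`. -/
def ContainsPattern (M : Finset Square) (τ : Equiv.Perm (Fin 3)) : Prop :=
  ∃ m : Fin 3 → Square, (∀ i, m i ∈ M) ∧
    (∀ i j : Fin 3, i < j → (m i).1 < (m j).1) ∧
    (∀ i j : Fin 3, (m i).2 < (m j).2 ↔ τ i < τ j)

/-- The rook placement `P` on `F` avoids `τ`: for every vertex `V` on the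
right/up border of `F`, the restriction of `P` to `R(V)` (equivalently, the
permutation order-isomorphic to it) avoids `τ`. -/
def AvoidsOn {n : ℕ} (F : FerrersBoard n) (P : Finset Square)
    (τ : Equiv.Perm (Fin 3)) : Prop :=
  ∀ V : ℕ × ℕ, F.IsBorderVertex V → ¬ ContainsPattern (P ∩ RV V) τ

/-- The pattern 231 (in one-line notation), as a permutation of `Fin 3`. -/
def perm231 : Equiv.Perm (Fin 3) := ⟨![1, 2, 0], ![2, 0, 1], by decide, by decide⟩

/-- The pattern 312 (in one-line notation), as a permutation of `Fin 3`. -/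
def perm312 : Equiv.Perm (Fin 3) := ⟨![2, 0, 1], ![1, 2, 0], by decide, by decide⟩

/-- The maximal length of an increasing sequence of markers of `M`. -/
noncomputable def maxIncSeq (M : Finset Square) : ℕ :=
  sSup {k : ℕ | ∃ f : Fin k → Square, (∀ i, f i ∈ M) ∧
    ∀ i j : Fin k, i < j → (f i).1 < (f j).1 ∧ (f i).2 < (f j).2}

/-- `S(P, V)`: the maximal length of an increasing sequence of markers of `P`
inside the rectangle `R(V)`.  The function `fun V => SPV P V`, restricted to the
vertices of the right/up border of `F`, is the sequence `S(P, F)`. -/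
noncomputable def SPV (P : Finset Square) (V : ℕ × ℕ) : ℕ := maxIncSeq (P ∩ RV V)

/-- The `S ↦ S⁺` operation on `F`-sequences, relative to the function
`N = N(F, ·)` counting markers in rectangles: `S⁺(V) = 0` if `S V = 0`, and
`S⁺(V) = N V + 1 - S V` otherwise. -/
def plusSeq (N S : ℕ × ℕ → ℕ) : ℕ × ℕ → ℕ :=
  fun V => if S V = 0 then 0 else N V + 1 - S V

/-- The 231-conditions for the pair `(F, S)`: monotonicity, the 0-conditions and
the (231-)diagonal condition. -/
def Conditions231 {n : ℕ} (F : FerrersBoard n) (S : ℕ × ℕ → ℕ) : Prop :=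
  -- (i) monotonicity conditions
  (∀ V1 V2 : ℕ × ℕ, F.IsBorderVertex V1 → F.IsBorderVertex V2 →
    (LeftOf V1 V2 ∨ Below V1 V2) → S V1 ≤ S V2 ∧ S V2 ≤ S V1 + 1) ∧
  -- (ii) 0-conditions: first and last values are 0, no two consecutive 0s
  S (0, F.height) = 0 ∧ S (F.width, 0) = 0 ∧
  (∀ V1 V2 : ℕ × ℕ, F.IsBorderVertex V1 → F.IsBorderVertex V2 →
    (LeftOf V1 V2 ∨ Below V1 V2) → ¬(S V1 = 0 ∧ S V2 = 0)) ∧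
  -- (iii) diagonal condition
  (∀ V1 V2 : ℕ × ℕ, F.DiagonalVertices V1 V2 → S V1 ≤ S V2)

/-- The 312-conditions for the pair `(F, S)`: the same as the 231-conditions,
with the inequality in the diagonal condition reversed. -/
def Conditions312 {n : ℕ} (F : FerrersBoard n) (S : ℕ × ℕ → ℕ) : Prop :=
  (∀ V1 V2 : ℕ × ℕ, F.IsBorderVertex V1 → F.IsBorderVertex V2 →
    (LeftOf V1 V2 ∨ Below V1 V2) → S V1 ≤ S V2 ∧ S V2 ≤ S V1 + 1) ∧
  S (0, F.height) = 0 ∧ S (F.width, 0) = 0 ∧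
  (∀ V1 V2 : ℕ × ℕ, F.IsBorderVertex V1 → F.IsBorderVertex V2 →
    (LeftOf V1 V2 ∨ Below V1 V2) → ¬(S V1 = 0 ∧ S V2 = 0)) ∧
  (∀ V1 V2 : ℕ × ℕ, F.DiagonalVertices V1 V2 → S V2 ≤ S V1)

/-!
For a full placement `P` and a border vertex `V = (a, b)`, every marker in a row `≥ b` lies in a
column `< a`, so `N(F, V) = #(P ∩ R(V)) = a + b - height F`. Hence `N` grows by exactly one along
each step of the border and is constant along diagonals, and since `0 < S(V) ≤ N(F, V)` whenever
`R(V)` contains a marker, the map `S ↦ N + 1 - S` turns the 312-conditions into the 231-conditions.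
-/

open Finset

namespace FerrersBoard

variable {n : ℕ} (F : FerrersBoard n)

theorem mem_squares_iff_lt_colHeight {c r : ℕ} : (c, r) ∈ F.squares ↔ r < F.colHeight c := by
  constructor
  · intro h
    have hsub : {c} ×ˢ range (r + 1) ⊆ F.squares.filter fun s => s.1 = c := by
      intro s hs
      simp only [mem_product, mem_singleton, mem_range] at hs
      exact mem_filter.2 ⟨F.closed _ h s hs.1.le (by omega), hs.1⟩
    simpa [colHeight] using card_le_card hsub
  · intro h
    by_contra hcr
    have hsub : (F.squares.filter fun s => s.1 = c) ⊆ {c} ×ˢ range r := by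
      intro s hs
      obtain ⟨hsF, rfl⟩ := mem_filter.1 hs
      refine mem_product.2 ⟨mem_singleton_self _, mem_range.2 (lt_of_not_ge fun hrs => ?_)⟩
      exact hcr (F.closed s hsF _ le_rfl hrs)
    have := card_le_card hsub
    simp only [card_product, card_singleton, card_range, one_mul] at this
    exact absurd h (not_lt.2 this)

theorem mem_squares_iff_lt_rowWidth {c r : ℕ} : (c, r) ∈ F.squares ↔ c < F.rowWidth r := by
  constructor
  · intro h
    have hsub : range (c + 1) ×ˢ {r} ⊆ F.squares.filter fun s => s.2 = r := by
      intro s hs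
      simp only [mem_product, mem_singleton, mem_range] at hs
      exact mem_filter.2 ⟨F.closed _ h s (by omega) hs.2.le, hs.2⟩
    simpa [rowWidth] using card_le_card hsub
  · intro h
    by_contra hcr
    have hsub : (F.squares.filter fun s => s.2 = r) ⊆ range c ×ˢ {r} := by
      intro s hs
      obtain ⟨hsF, rfl⟩ := mem_filter.1 hs
      refine mem_product.2 ⟨mem_range.2 (lt_of_not_ge fun hcs => ?_), mem_singleton_self _⟩
      exact hcr (F.closed s hsF _ hcs le_rfl)
    have := card_le_card hsub
    simp only [card_product, card_singleton, card_range, mul_one] at this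
    exact absurd h (not_lt.2 this)

theorem colHeight_antitone : Antitone F.colHeight := by
  intro c c' hcc'
  by_contra! h
  have hc' : (c', F.colHeight c) ∈ F.squares := F.mem_squares_iff_lt_colHeight.2 h
  exact lt_irrefl _ (F.mem_squares_iff_lt_colHeight.1 (F.closed _ hc' _ hcc' le_rfl))

theorem colHeight_le_height (c : ℕ) : F.colHeight c ≤ F.height :=
  F.colHeight_antitone (Nat.zero_le c)

theorem IsBorderVertex.snd_le_height {F : FerrersBoard n} {V : ℕ × ℕ} (hV : F.IsBorderVertex V) :
    V.2 ≤ F.height :=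
  hV.2.2.trans (F.colHeight_le_height _)

end FerrersBoard

namespace IsFullPlacement

variable {n : ℕ} {F : FerrersBoard n} {P : Finset Square}

theorem card_filter_fst_lt (hP : IsFullPlacement F P) {a : ℕ} (ha : a ≤ F.width) :
    #(P.filter fun s => s.1 < a) = a := by
  refine (card_bij (fun s _ => s.1) (fun s hs => mem_range.2 (mem_filter.1 hs).2)
    (fun s hs t ht hst => hP.1.2.1 s (mem_filter.1 hs).1 t (mem_filter.1 ht).1 hst)
    (fun c hc => ?_)).trans (card_range a)
  have hc0 : (c, 0) ∈ F.squares :=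
    F.mem_squares_iff_lt_rowWidth.2 ((mem_range.1 hc).trans_le ha)
  obtain ⟨r, hr⟩ := (hP.2 _ hc0).1
  exact ⟨(c, r), mem_filter.2 ⟨hr, mem_range.1 hc⟩, rfl⟩

theorem card_filter_snd_lt (hP : IsFullPlacement F P) {b : ℕ} (hb : b ≤ F.height) :
    #(P.filter fun s => s.2 < b) = b := by
  refine (card_bij (fun s _ => s.2) (fun s hs => mem_range.2 (mem_filter.1 hs).2)
    (fun s hs t ht hst => hP.1.2.2 s (mem_filter.1 hs).1 t (mem_filter.1 ht).1 hst)
    (fun r hr => ?_)).trans (card_range b)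
  have h0r : (0, r) ∈ F.squares :=
    F.mem_squares_iff_lt_colHeight.2 ((mem_range.1 hr).trans_le hb)
  obtain ⟨c, hc⟩ := (hP.2 _ h0r).2
  exact ⟨(c, r), mem_filter.2 ⟨hc, mem_range.1 hr⟩, rfl⟩

theorem card_eq_height (hP : IsFullPlacement F P) : #P = F.height := by
  conv_lhs => rw [← filter_true_of_mem fun s hs => F.mem_squares_iff_lt_colHeight.1
    (F.closed s (hP.1.1 hs) (0, s.2) (Nat.zero_le _) le_rfl)]
  exact hP.card_filter_snd_lt le_rfl

theorem fst_lt_of_le_snd (hP : IsFullPlacement F P) {V : ℕ × ℕ} (hV : F.IsBorderVertex V)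
    {s : Square} (hs : s ∈ P) (hbs : V.2 ≤ s.2) : s.1 < V.1 := by
  by_contra! has
  have hVs : (V.1, s.2) ∈ F.squares := F.closed s (hP.1.1 hs) _ has le_rfl
  exact absurd hV.2.1 (not_le.2 (hbs.trans_lt (F.mem_squares_iff_lt_colHeight.1 hVs)))

theorem card_inter_RV_add_height (hP : IsFullPlacement F P) {V : ℕ × ℕ}
    (hV : F.IsBorderVertex V) : #(P ∩ RV V) + F.height = V.1 + V.2 := by
  have hsplit := card_filter_add_card_filter_not (s := P.filter fun s => s.1 < V.1)
    (fun s => s.2 < V.2)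
  have hRV : ((P.filter fun s => s.1 < V.1).filter fun s => s.2 < V.2) = P ∩ RV V := by
    ext s
    simp [RV, and_assoc]
  have hhigh : ((P.filter fun s => s.1 < V.1).filter fun s => ¬s.2 < V.2) =
      P.filter fun s => ¬s.2 < V.2 := by
    rw [filter_filter]
    exact filter_congr fun s hs => and_iff_right_of_imp
      fun h => hP.fst_lt_of_le_snd hV hs (not_lt.1 h)
  have hrows := card_filter_add_card_filter_not (s := P) (fun s => s.2 < V.2)
  rw [hRV, hhigh, hP.card_filter_fst_lt hV.1] at hsplit
  rw [hP.card_filter_snd_lt hV.snd_le_height, hP.card_eq_height] at hrows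
  omega

end IsFullPlacement

theorem length_le_card_of_increasing {M : Finset Square} {k : ℕ} {f : Fin k → Square}
    (hfM : ∀ i, f i ∈ M) (hf : ∀ i j : Fin k, i < j → (f i).1 < (f j).1 ∧ (f i).2 < (f j).2) :
    k ≤ #M := by
  have hinj : Function.Injective f :=
    Function.Injective.of_comp (f := Prod.fst) (StrictMono.injective fun i j h => (hf i j h).1)
  simpa using card_le_card_of_injOn (s := univ) f (fun i _ => hfM i) hinj.injOn

theorem maxIncSeq_le_card (M : Finset Square) : maxIncSeq M ≤ #M :=
  csSup_le' fun _ ⟨_, hfM, hf⟩ => length_le_card_of_increasing hfM hf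

theorem maxIncSeq_pos {M : Finset Square} (hM : M.Nonempty) : 0 < maxIncSeq M := by
  obtain ⟨m, hm⟩ := hM
  refine le_csSup ⟨#M, ?_⟩ ⟨fun _ => m, fun _ => hm, fun i j hij => absurd hij ?_⟩
  · rintro _ ⟨_, hfM, hf⟩
    exact length_le_card_of_increasing hfM hf
  · simp [Subsingleton.elim i j]

section PlusSeq

variable {N S : ℕ × ℕ → ℕ}

theorem plusSeq_eq_zero_iff {V : ℕ × ℕ} (hSN : S V ≤ N V) : plusSeq N S V = 0 ↔ S V = 0 := by
  unfold plusSeq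
  split_ifs <;> omega

theorem plusSeq_step {V1 V2 : ℕ × ℕ} (hN : N V2 = N V1 + 1) (hSN : S V2 ≤ N V2)
    (hpos : 0 < N V1 → 0 < S V1) (hS : S V1 ≤ S V2 ∧ S V2 ≤ S V1 + 1) :
    plusSeq N S V1 ≤ plusSeq N S V2 ∧ plusSeq N S V2 ≤ plusSeq N S V1 + 1 := by
  unfold plusSeq
  split_ifs <;> omega

theorem plusSeq_le_plusSeq_of_ge {V1 V2 : ℕ × ℕ} (hN : N V1 = N V2) (hSN : S V1 ≤ N V1)
    (hpos : 0 < N V2 → 0 < S V2) (hS : S V2 ≤ S V1) : plusSeq N S V1 ≤ plusSeq N S V2 := by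
  unfold plusSeq
  split_ifs <;> omega

theorem conditions231_plusSeq_of_conditions312 {n : ℕ} {F : FerrersBoard n} (c : ℕ)
    (hN : ∀ V, F.IsBorderVertex V → N V + c = V.1 + V.2)
    (hSN : ∀ V, F.IsBorderVertex V → S V ≤ N V)
    (hpos : ∀ V, F.IsBorderVertex V → 0 < N V → 0 < S V) (h312 : Conditions312 F S) :
    Conditions231 F (plusSeq N S) := by
  obtain ⟨hmono, hfirst, hlast, hzeros, hdiag⟩ := h312
  refine ⟨fun V1 V2 hV1 hV2 hadj => ?_, by simp [plusSeq, hfirst], by simp [plusSeq, hlast],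
    fun V1 V2 hV1 hV2 hadj => ?_, fun V1 V2 hd => ?_⟩
  · have hstep : N V2 = N V1 + 1 := by
      have := hN V1 hV1
      have := hN V2 hV2
      rcases hadj with ⟨_, _⟩ | ⟨_, _⟩ <;> omega
    exact plusSeq_step hstep (hSN V2 hV2) (hpos V1 hV1) (hmono V1 V2 hV1 hV2 hadj)
  · rw [plusSeq_eq_zero_iff (hSN V1 hV1), plusSeq_eq_zero_iff (hSN V2 hV2)]
    exact hzeros V1 V2 hV1 hV2 hadj
  · obtain ⟨hV1, hV2, k, hk1, hk2, -⟩ := id hd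
    have hdiagN : N V1 = N V2 := by
      have := hN V1 hV1
      have := hN V2 hV2
      omega
    exact plusSeq_le_plusSeq_of_ge hdiagN (hSN V1 hV1) (hpos V2 hV2) (hdiag V1 V2 hd)

end PlusSeq

/-- Lemma 2, 312 case.  Let `P` be a full rook placement on a
Ferrers board `F`, let `S = S(P,F)`, and let `N = N(F,·)` count the markers that
any full rook placement on `F` has in `R(V)`.  If `(F, S)` satisfies the
312-conditions then `(F, S⁺)` satisfies the 231-conditions. -/
theorem plusSeq_conditions231_of_conditions312 {n : ℕ} (F : FerrersBoard n)
    (P : Finset Square) (hP : IsFullPlacement F P) (N : ℕ × ℕ → ℕ)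
    (hN : ∀ Q : Finset Square, IsFullPlacement F Q →
      ∀ V : ℕ × ℕ, F.IsBorderVertex V → (Q ∩ RV V).card = N V)
    (h312 : Conditions312 F (SPV P)) :
    Conditions231 F (plusSeq N (SPV P)) := by
  have hcard : ∀ V, F.IsBorderVertex V → #(P ∩ RV V) = N V := hN P hP
  refine conditions231_plusSeq_of_conditions312 F.height (fun V hV => ?_) (fun V hV => ?_)
    (fun V hV hNV => ?_) h312
  · rw [← hcard V hV]
    exact hP.card_inter_RV_add_height hV
  · rw [← hcard V hV]
    exact maxIncSeq_le_card _
  · rw [← hcard V hV, card_pos] at hNV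
    exact maxIncSeq_pos hNV
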